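/- Let G = Q₈ = ⟨x,y | x⁴ = 1, x² = y², xʸ = x⁻¹⟩. The 2-Cayley digraph Γ = Cay(G,(T_{i,j})_{2×2}) with T_{1,2} = {1, x, y}, T_{2,1} = {xy, x²}, T_{1,1} = T_{2,2} = ∅, is an oriented graph (T_{1,2} ∩ T_{2,1}⁻¹ = ∅) and satisfies Aut(Γ) ≅ Q₈, acting semiregularly with two orbits giving a bipartition; i.e., Γ is a 2-POSR of Q₈. -/

import Mathlib

/-!
Right translations `(g, i) ↦ (g * h⁻¹, i)` are automorphisms of any 2-Cayley digraph, so it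
suffices to show that every automorphism `σ` preserves the two parts and is trivial once it fixes
`(1, 0)`. Parts are preserved since out-degrees are `|S| = 3` and `|T| = 2`. In `Q₈`, `x³` is the
only element of `T S` with two factorisations (`x² · x = xy · y`), and `x²y` the only one of `S T`
(`x · xy = y · x²`); hence two distinct 2-paths lead from `(g, 0)` only to `(x³g, 0)` and from
`(g, 1)` only to `(x²y g, 1)`, so `σ` commutes with these left multiplications. As `(g, 1)` is the
unique common out-neighbour of `(g, 0)` and `(x³g, 0)`, `σ` acts by the same map on both parts,
and that map commutes with left multiplication by the generators `x³, x²y` and fixes `1`.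
-/

/-- Arc relation of the 2-Cayley digraph with `T₁₂ = S`, `T₂₁ = T`,
`T₁₁ = T₂₂ = ∅`, on vertex set `G × Fin 2`. -/
def cay2Arc {G : Type*} [Group G] (S T : Set G) (u v : G × Fin 2) : Prop :=
  (u.2 = 0 ∧ v.2 = 1 ∧ ∃ s ∈ S, v.1 = s * u.1) ∨
    (u.2 = 1 ∧ v.2 = 0 ∧ ∃ t ∈ T, v.1 = t * u.1)

/-- The automorphism group of the digraph with arc relation `Arc`. -/
def autSubgroup {V : Type*} (Arc : V → V → Prop) : Subgroup (Equiv.Perm V) where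
  carrier := {σ | ∀ u v, Arc u v ↔ Arc (σ u) (σ v)}
  one_mem' := fun _ _ => Iff.rfl
  mul_mem' := by
    intro σ τ hσ hτ u v
    simpa using (hτ u v).trans (hσ (τ u) (τ v))
  inv_mem' := by
    intro σ hσ u v
    simpa using (hσ (σ⁻¹ u) (σ⁻¹ v)).symm

section Digraph

variable {V : Type*} {Arc : V → V → Prop} {σ : Equiv.Perm V}

def TwoDistinctTwoPaths (Arc : V → V → Prop) (u v : V) : Prop :=
  ∃ m m', m ≠ m' ∧ Arc u m ∧ Arc m v ∧ Arc u m' ∧ Arc m' v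

instance [Fintype V] [DecidableEq V] [DecidableRel Arc] : DecidableRel (TwoDistinctTwoPaths Arc) :=
  fun u v => by unfold TwoDistinctTwoPaths; infer_instance

theorem twoDistinctTwoPaths_apply_iff (hσ : σ ∈ autSubgroup Arc) {u v : V} :
    TwoDistinctTwoPaths Arc (σ u) (σ v) ↔ TwoDistinctTwoPaths Arc u v := by
  have key : ∀ τ ∈ autSubgroup Arc, ∀ u v,
      TwoDistinctTwoPaths Arc u v → TwoDistinctTwoPaths Arc (τ u) (τ v) := by
    rintro τ hτ u v ⟨m, m', hne, h₁, h₂, h₃, h₄⟩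
    exact ⟨τ m, τ m', τ.injective.ne hne, (hτ _ _).1 h₁, (hτ _ _).1 h₂, (hτ _ _).1 h₃,
      (hτ _ _).1 h₄⟩
  refine ⟨fun h => ?_, key σ hσ u v⟩
  simpa using key σ⁻¹ (inv_mem hσ) _ _ h

theorem ncard_setOf_arc_apply (hσ : σ ∈ autSubgroup Arc) (v : V) :
    {w | Arc (σ v) w}.ncard = {w | Arc v w}.ncard := by
  have himage : {w | Arc (σ v) w} = σ '' {w | Arc v w} := by
    ext w
    simp [Equiv.image_eq_preimage_symm, hσ v (σ.symm w)]
  rw [himage, Set.ncard_image_of_injective _ σ.injective]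

end Digraph

theorem apply_eq_self_of_map_mul_left {M : Type*} [Monoid M] {s : Set M}
    (hs : Submonoid.closure s = ⊤) {f : M → M} (hf : ∀ c ∈ s, ∀ g, f (c * g) = c * f g)
    (h1 : f 1 = 1) (g : M) : f g = g := by
  let H : Submonoid M :=
    { carrier := {c | ∀ g, f (c * g) = c * f g}
      one_mem' := by simp
      mul_mem' := fun {a b} ha hb g => by rw [mul_assoc, ha, hb, mul_assoc] }
  have hg : g ∈ H := (Submonoid.closure_le (S := H)).2 hf (hs ▸ Submonoid.mem_top g)
  simpa [h1] using hg 1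

section Cayley

variable {G : Type*} [Group G] {S T : Set G}

instance [Fintype G] [DecidableEq G] [DecidablePred (· ∈ S)] [DecidablePred (· ∈ T)] :
    DecidableRel (cay2Arc S T) :=
  fun u v => by unfold cay2Arc; infer_instance

def cay2Shift : G →* Equiv.Perm (G × Fin 2) where
  toFun g := (Equiv.mulRight g⁻¹).prodCongr (Equiv.refl (Fin 2))
  map_one' := by ext <;> simp
  map_mul' g h := by ext <;> simp [mul_assoc]

@[simp]
theorem cay2Shift_apply (g : G) (p : G × Fin 2) : cay2Shift g p = (p.1 * g⁻¹, p.2) := rfl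

theorem cay2Shift_mem_autSubgroup (g : G) : cay2Shift g ∈ autSubgroup (cay2Arc S T) := by
  intro u v
  simp only [cay2Arc, cay2Shift_apply, ← mul_assoc, mul_left_inj]

theorem cay2Shift_injective : Function.Injective (cay2Shift : G →* Equiv.Perm (G × Fin 2)) := by
  refine (injective_iff_map_eq_one _).2 fun g hg => ?_
  simpa using congrArg (fun σ : Equiv.Perm (G × Fin 2) => (σ (1, 0)).1) hg

@[simp]
theorem cay2Shift_apply_eq_self_iff {g : G} {p : G × Fin 2} : cay2Shift g p = p ↔ g = 1 := by
  simp [Prod.ext_iff]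

theorem ncard_setOf_cay2Arc_zero (g : G) : {w | cay2Arc S T (g, 0) w}.ncard = S.ncard := by
  have : {w | cay2Arc S T (g, 0) w} = (fun s => (s * g, 1)) '' S := by
    ext ⟨h, i⟩
    simp only [cay2Arc, Set.mem_image, Prod.mk.injEq]
    grind
  rw [this, Set.ncard_image_of_injective _ fun s t hst => by simpa using hst]

theorem ncard_setOf_cay2Arc_one (g : G) : {w | cay2Arc S T (g, 1) w}.ncard = T.ncard := by
  have : {w | cay2Arc S T (g, 1) w} = (fun t => (t * g, 0)) '' T := by
    ext ⟨h, i⟩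
    simp only [cay2Arc, Set.mem_image, Prod.mk.injEq]
    grind
  rw [this, Set.ncard_image_of_injective _ fun s t hst => by simpa using hst]

theorem snd_apply_eq_of_ncard_ne (hST : S.ncard ≠ T.ncard) {σ : Equiv.Perm (G × Fin 2)}
    (hσ : σ ∈ autSubgroup (cay2Arc S T)) (p : G × Fin 2) : (σ p).2 = p.2 := by
  obtain ⟨g, i⟩ := p
  have hdeg := ncard_setOf_arc_apply hσ (g, i)
  generalize σ (g, i) = q at hdeg ⊢
  obtain ⟨h, j⟩ := q
  fin_cases i <;> fin_cases j <;>
    simp_all [ncard_setOf_cay2Arc_zero, ncard_setOf_cay2Arc_one, eq_comm]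

theorem iff_eq_mul_of_cay2Shift_invariant {P : G × Fin 2 → G × Fin 2 → Prop}
    (hP : ∀ g u v, P (cay2Shift g u) (cay2Shift g v) ↔ P u v) {b : G} {i j : Fin 2}
    (h : ∀ v, P (1, i) v ↔ v = (b, j)) (g : G) (v : G × Fin 2) :
    P (g, i) v ↔ v = (b * g, j) := by
  rw [← hP g, cay2Shift_apply, mul_inv_cancel, h]
  simp [Prod.ext_iff, mul_inv_eq_iff_eq_mul]

theorem eq_one_of_apply_eq_self {c d : G}
    (hc : ∀ v, TwoDistinctTwoPaths (cay2Arc S T) (1, 0) v ↔ v = (c, 0))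
    (hd : ∀ v, TwoDistinctTwoPaths (cay2Arc S T) (1, 1) v ↔ v = (d, 1))
    (hcS : ∀ v, cay2Arc S T (1, 0) v ∧ cay2Arc S T (c, 0) v ↔ v = (1, 1))
    (hcd : Submonoid.closure {c, d} = ⊤) {σ : Equiv.Perm (G × Fin 2)}
    (hσ : σ ∈ autSubgroup (cay2Arc S T)) (hpart : ∀ p, (σ p).2 = p.2)
    (hfix : σ (1, 0) = (1, 0)) : σ = 1 := by
  have hshift : ∀ i (b : G), (∀ v, TwoDistinctTwoPaths (cay2Arc S T) (1, i) v ↔ v = (b, i)) →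
      ∀ g, σ (b * g, i) = (b * (σ (g, i)).1, i) := by
    intro i b hb g
    have key := iff_eq_mul_of_cay2Shift_invariant
      (fun g _ _ => twoDistinctTwoPaths_apply_iff (cay2Shift_mem_autSubgroup g)) hb
    rw [← key, show ((σ (g, i)).1, i) = σ (g, i) from Prod.ext rfl (hpart (g, i)).symm]
    exact (twoDistinctTwoPaths_apply_iff hσ).2 ((key g _).2 rfl)
  set A : G → G := fun g => (σ (g, 0)).1
  have hA : ∀ g, σ (g, 0) = (A g, 0) := fun g => Prod.ext rfl (hpart _)
  have hAc : ∀ g, σ (c * g, 0) = (c * A g, 0) := by simpa only [hA] using hshift 0 c hc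
  have hB : ∀ g, σ (g, 1) = (A g, 1) := by
    intro g
    have key := iff_eq_mul_of_cay2Shift_invariant
      (P := fun u v => cay2Arc S T u v ∧ cay2Arc S T (c * u.1, u.2) v)
      (fun g u v => by
        rw [cay2Shift_apply, cay2Shift_apply, ← mul_assoc]
        exact and_congr (cay2Shift_mem_autSubgroup g _ _).symm
          (cay2Shift_mem_autSubgroup g (c * u.1, u.2) v).symm)
      (b := 1) (i := 0) (j := 1) fun v => by simpa only [mul_one] using hcS v
    obtain ⟨h₀, h₁⟩ := (key g (g, 1)).2 (by rw [one_mul])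
    simpa using (key (A g) _).1 ⟨hA g ▸ (hσ _ _).1 h₀, hAc g ▸ (hσ _ _).1 h₁⟩
  have hid : ∀ g, A g = g := by
    refine apply_eq_self_of_map_mul_left hcd ?_ (by simp [A, hfix])
    rintro b (rfl | rfl) g
    · simp [A, hAc]
    · have h := hshift 1 _ hd g
      rw [hB, hB] at h
      exact (Prod.mk.inj h).1
  refine Equiv.ext fun ⟨g, i⟩ => ?_
  fin_cases i <;> simp [hA, hB, hid]

theorem exists_cay2Shift_eq (hpart : ∀ σ ∈ autSubgroup (cay2Arc S T), ∀ p, (σ p).2 = p.2)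
    (hstab : ∀ σ ∈ autSubgroup (cay2Arc S T), σ (1, 0) = (1, 0) → σ = 1)
    {σ : Equiv.Perm (G × Fin 2)} (hσ : σ ∈ autSubgroup (cay2Arc S T)) :
    ∃ g, cay2Shift g = σ := by
  set g := (σ (1, 0)).1
  refine ⟨g⁻¹, inv_mul_eq_one.1 (hstab _ (mul_mem (inv_mem (cay2Shift_mem_autSubgroup _)) hσ) ?_)⟩
  rw [← map_inv, inv_inv, Equiv.Perm.mul_apply, cay2Shift_apply, hpart σ hσ, mul_inv_cancel]

theorem bijective_cay2Shift_codRestrict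
    (hsurj : ∀ σ ∈ autSubgroup (cay2Arc S T), ∃ g, cay2Shift g = σ) :
    Function.Bijective (cay2Shift.codRestrict _ cay2Shift_mem_autSubgroup :
      G →* autSubgroup (cay2Arc S T)) :=
  ⟨fun _ _ hgh => cay2Shift_injective (congrArg Subtype.val hgh),
    fun ⟨σ, hσ⟩ => (hsurj σ hσ).imp fun _ hg => Subtype.ext hg⟩

end Cayley

open QuaternionGroup

local notation "Q₈" => QuaternionGroup 2

-- `x = a 1` and `y = xa 0`, so that `x³ = a 3` and `x²y = xa 2`.
local notation "Γ₈" => cay2Arc ({1, a 1, xa 0} : Set Q₈) {a 1 * xa 0, a 1 ^ 2}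

theorem twoDistinctTwoPaths_q8_zero : ∀ v, TwoDistinctTwoPaths Γ₈ (1, 0) v ↔ v = (a 3, 0) := by
  decide

theorem twoDistinctTwoPaths_q8_one : ∀ v, TwoDistinctTwoPaths Γ₈ (1, 1) v ↔ v = (xa 2, 1) := by
  decide

theorem cay2Arc_q8_common : ∀ v, Γ₈ (1, 0) v ∧ Γ₈ (a 3, 0) v ↔ v = (1, 1) := by decide

theorem closure_q8 : Submonoid.closure ({a 3, xa 2} : Set Q₈) = ⊤ := by
  have hgen : ∀ g : Q₈, ∃ i : Fin 4, g = a 3 ^ (i : ℕ) ∨ g = a 3 ^ (i : ℕ) * xa 2 := by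
    decide
  have hx : (a 3 : Q₈) ∈ Submonoid.closure {a 3, xa 2} := Submonoid.subset_closure (by simp)
  have hy : (xa 2 : Q₈) ∈ Submonoid.closure {a 3, xa 2} := Submonoid.subset_closure (by simp)
  refine eq_top_iff.2 fun g _ => ?_
  obtain ⟨i, rfl | rfl⟩ := hgen g
  exacts [pow_mem hx _, mul_mem (pow_mem hx _) hy]

/-- The 2-Cayley digraph of `Q₈` with `T₁₂ = {1, x, y}`, `T₂₁ = {xy, x²}`
is an oriented graph and a 2-POSR of `Q₈`. -/
theorem stmt_13 :
    let x : QuaternionGroup 2 := QuaternionGroup.a 1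
    let y : QuaternionGroup 2 := QuaternionGroup.xa 0
    let S : Set (QuaternionGroup 2) := {1, x, y}
    let T : Set (QuaternionGroup 2) := {x * y, x ^ 2}
    let Arc := cay2Arc S T
    S ∩ T⁻¹ = ∅ ∧
      Nonempty (autSubgroup Arc ≃* QuaternionGroup 2) ∧
      (∀ σ ∈ autSubgroup Arc, (∃ p, σ p = p) → σ = 1) ∧
      (∀ σ ∈ autSubgroup Arc, ∀ p : QuaternionGroup 2 × Fin 2, (σ p).2 = p.2) ∧
      (∀ (g h : QuaternionGroup 2) (i : Fin 2),
        ∃ σ ∈ autSubgroup Arc, σ (g, i) = (h, i)) := by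
  intro x y S T Arc
  have hST : S.ncard ≠ T.ncard := by
    rw [Set.ncard_insert_of_notMem (by decide), Set.ncard_pair (by decide),
      Set.ncard_pair (by decide)]
    decide
  have hpart : ∀ σ ∈ autSubgroup Arc, ∀ p, (σ p).2 = p.2 := fun _ hσ =>
    snd_apply_eq_of_ncard_ne hST hσ
  have hshift : ∀ σ ∈ autSubgroup Arc, ∃ g, cay2Shift g = σ := fun _ hσ =>
    exists_cay2Shift_eq hpart (fun τ hτ => eq_one_of_apply_eq_self twoDistinctTwoPaths_q8_zero
      twoDistinctTwoPaths_q8_one cay2Arc_q8_common closure_q8 hτ (hpart τ hτ)) hσ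
  refine ⟨?_, ⟨(MulEquiv.ofBijective _ (bijective_cay2Shift_codRestrict hshift)).symm⟩, ?_,
    hpart, ?_⟩
  · ext z
    simp only [Set.mem_inter_iff, Set.mem_inv, Set.mem_empty_iff_false, iff_false]
    revert z
    decide
  · rintro σ hσ ⟨p, hp⟩
    obtain ⟨g, rfl⟩ := hshift σ hσ
    rw [cay2Shift_apply_eq_self_iff.1 hp, map_one]
  · intro g h i
    refine ⟨cay2Shift (h⁻¹ * g), cay2Shift_mem_autSubgroup _, ?_⟩
    rw [cay2Shift_apply, mul_inv_rev, inv_inv, mul_inv_cancel_left]
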